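/- Suppose 𝒜 satisfies (S1). Let μ be a Radon measure on Ω_T and let u ∈ L^{p−1}_loc(0,T; W^{1,p−1}_loc(Ω)) be a weak solution of ∂_t u − div 𝒜(x,t,∇u) = μ such that for every k ∈ ℕ the truncation min(u,k) belongs to L^p_loc(0,T; W^{1,p}_loc(Ω)), is a weak supersolution of ∂_t u − div 𝒜(x,t,∇u) = 0 in Ω_T with Riesz measure μ_k, and satisfies ∇min(u,k) = χ_{{u<k}} ∇u almost everywhere. Then the measures μ_k converge weakly to μ as k → ∞, in the sense that ∫_{Ω_T} φ dμ_k → ∫_{Ω_T} φ dμ for every φ ∈ C_c^∞(Ω_T). -/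

import Mathlib

open MeasureTheory Set Metric Filter
open scoped ENNReal Topology InnerProductSpace

noncomputable section

/-- Euclidean space `ℝⁿ`. -/
abbrev Rn (n : ℕ) : Type := EuclideanSpace ℝ (Fin n)

/-- Space-time `ℝⁿ × ℝ`. -/
abbrev Rp (n : ℕ) : Type := Rn n × ℝ

/-- The intrinsic cylinder `Q_{r,λ}(z₀) = B(x₀,r) × (t₀ − λ^{2−p} r^p, t₀ + λ^{2−p} r^p)`. -/
def cylQ {n : ℕ} (p : ℝ) (z₀ : Rp n) (r lam : ℝ) : Set (Rp n) :=
  Metric.ball z₀.1 r ×ˢ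
    Set.Ioo (z₀.2 - lam ^ (2 - p) * r ^ p) (z₀.2 + lam ^ (2 - p) * r ^ p)

/-- The intrinsic parabolic metric `d_α((x,t),(y,s)) = max{|x−y|, |t−s|^{1/(p+α(2−p))}}`. -/
def dParab {n : ℕ} (p α : ℝ) (z w : Rp n) : ℝ :=
  max (dist z.1 w.1) (|z.2 - w.2| ^ (1 / (p + α * (2 - p))))

/-- The intrinsic parabolic Hausdorff measure `ℋ^σ_{(α)}(E)`: the limit, as `δ ↓ 0`, of the
infimum of `∑ rᵢ^σ` over countable covers of `E` by cylinders `Q_{rᵢ, rᵢ^α}(zᵢ)` with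
`0 < rᵢ < δ`.  (The infimum is nondecreasing as `δ` decreases, so the limit is the
supremum over `δ > 0`.) -/
def parabHausdorff {n : ℕ} (p α σ : ℝ) (E : Set (Rp n)) : ℝ≥0∞ :=
  ⨆ (δ : ℝ) (_ : 0 < δ),
    ⨅ (c : ℕ → Rp n × ℝ) (_ : ∀ i, 0 < (c i).2 ∧ (c i).2 < δ)
      (_ : E ⊆ ⋃ i, cylQ p (c i).1 ((c i).2) (((c i).2) ^ α)),
      ∑' i, ENNReal.ofReal (((c i).2) ^ σ)

/-- Smooth test functions compactly supported in `U`. -/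
def IsTestOn {n : ℕ} (φ : Rp n → ℝ) (U : Set (Rp n)) : Prop :=
  ContDiff ℝ (⊤ : ℕ∞) φ ∧ HasCompactSupport φ ∧ tsupport φ ⊆ U

/-- The time derivative `∂_t φ` of a (smooth) function on space-time. -/
def tDeriv {n : ℕ} (φ : Rp n → ℝ) (z : Rp n) : ℝ := fderiv ℝ φ z (0, 1)

/-- The spatial gradient `∇φ` of a (smooth) function on space-time. -/
def sGrad {n : ℕ} (φ : Rp n → ℝ) (z : Rp n) : Rn n :=
  (EuclideanSpace.equiv (Fin n) ℝ).symm fun i => fderiv ℝ φ z (EuclideanSpace.single i 1, 0)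

/-- `|f|^q` is locally integrable on `U` (i.e. `f ∈ L^q_loc(U)`), scalar version. -/
def LqLocOn {n : ℕ} (q : ℝ) (f : Rp n → ℝ) (U : Set (Rp n)) : Prop :=
  ∀ K, K ⊆ U → IsCompact K → IntegrableOn (fun z => |f z| ^ q) K volume

/-- `‖f‖^q` is locally integrable on `U`, vector-valued version. -/
def LqLocOnVec {n : ℕ} (q : ℝ) (f : Rp n → Rn n) (U : Set (Rp n)) : Prop :=
  ∀ K, K ⊆ U → IsCompact K → IntegrableOn (fun z => ‖f z‖ ^ q) K volume

/-- `du` is the weak spatial gradient of `u` on `U`: integration by parts against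
smooth test functions compactly supported in `U`, in each spatial direction. -/
def HasWeakGradOn {n : ℕ} (u : Rp n → ℝ) (du : Rp n → Rn n) (U : Set (Rp n)) : Prop :=
  ∀ φ : Rp n → ℝ, IsTestOn φ U → ∀ i : Fin n,
    ∫ z in U, u z * fderiv ℝ φ z (EuclideanSpace.single i 1, 0) ∂volume
      = - ∫ z in U, du z i * φ z ∂volume

/-- The weak formulation integral `∫∫_U (−u ∂_t φ + 𝒜(z,∇u)·∇φ) dx dt`. -/
def weakForm {n : ℕ} (A : Rp n → Rn n → Rn n) (u : Rp n → ℝ) (du : Rp n → Rn n)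
    (U : Set (Rp n)) (φ : Rp n → ℝ) : ℝ :=
  ∫ z in U, (-(u z) * tDeriv φ z + ⟪A z (du z), sGrad φ z⟫_ℝ) ∂volume

/-- `u` (with weak gradient `du`) is a weak solution of `∂_t u − div 𝒜(x,t,∇u) = 0` in `U`. -/
def IsWeakSolOn {n : ℕ} (p : ℝ) (A : Rp n → Rn n → Rn n)
    (u : Rp n → ℝ) (du : Rp n → Rn n) (U : Set (Rp n)) : Prop :=
  LqLocOn p u U ∧ LqLocOnVec p du U ∧ HasWeakGradOn u du U ∧
  ∀ φ, IsTestOn φ U → weakForm A u du U φ = 0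

/-- `u` (with weak gradient `du`) is a weak supersolution of
`∂_t u − div 𝒜(x,t,∇u) = 0` in `U`. -/
def IsWeakSuperOn {n : ℕ} (p : ℝ) (A : Rp n → Rn n → Rn n)
    (u : Rp n → ℝ) (du : Rp n → Rn n) (U : Set (Rp n)) : Prop :=
  LqLocOn p u U ∧ LqLocOnVec p du U ∧ HasWeakGradOn u du U ∧
  ∀ φ, IsTestOn φ U → (∀ z, 0 ≤ φ z) → 0 ≤ weakForm A u du U φ

/-- `μ` is the Riesz measure of the weak supersolution `u` on `U`:  a (Radon) measure,
carried by `U`, finite on compact subsets of `U`, representing the weak form. -/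
def IsRieszMeasureOn {n : ℕ} (A : Rp n → Rn n → Rn n) (u : Rp n → ℝ) (du : Rp n → Rn n)
    (U : Set (Rp n)) (μ : Measure (Rp n)) : Prop :=
  (∀ K, K ⊆ U → IsCompact K → μ K < ⊤) ∧ μ Uᶜ = 0 ∧
  ∀ φ, IsTestOn φ U → weakForm A u du U φ = ∫ z, φ z ∂μ

/-- `u ∈ L^{p−1}_loc(0,T;W^{1,p−1}_loc)` (with weak gradient `du`) is a weak solution of the
measure-data problem `∂_t u − div 𝒜(x,t,∇u) = μ` in `U`. -/
def IsWeakSolMeasureOn {n : ℕ} (p : ℝ) (A : Rp n → Rn n → Rn n) (u : Rp n → ℝ)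
    (du : Rp n → Rn n) (U : Set (Rp n)) (μ : Measure (Rp n)) : Prop :=
  LqLocOn (p - 1) u U ∧ LqLocOnVec (p - 1) du U ∧ HasWeakGradOn u du U ∧
  ∀ φ, IsTestOn φ U → weakForm A u du U φ = ∫ z, φ z ∂μ

/-- `𝒜` is a Carathéodory map: measurable in `z = (x,t)` for every `ξ`, and continuous in `ξ`
for a.e. `z ∈ U`. -/
def Caratheodory {n : ℕ} (U : Set (Rp n)) (A : Rp n → Rn n → Rn n) : Prop :=
  (∀ ξ, Measurable fun z => A z ξ) ∧
  ∀ᵐ z ∂(volume.restrict U), Continuous fun ξ => A z ξ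

/-- Structure condition (S1): coercivity and `p`-growth, for a.e. `z ∈ U` and all `ξ`. -/
def CondS1 {n : ℕ} (p ν L : ℝ) (U : Set (Rp n)) (A : Rp n → Rn n → Rn n) : Prop :=
  ∀ᵐ z ∂(volume.restrict U), ∀ ξ : Rn n,
    ν * ‖ξ‖ ^ p ≤ ⟪A z ξ, ξ⟫_ℝ ∧ ‖A z ξ‖ ≤ L * ‖ξ‖ ^ (p - 1)

/-- Structure condition (S2a): strict monotonicity. -/
def CondS2a {n : ℕ} (U : Set (Rp n)) (A : Rp n → Rn n → Rn n) : Prop :=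
  ∀ᵐ z ∂(volume.restrict U), ∀ ξ η : Rn n, ξ ≠ η → 0 < ⟪A z ξ - A z η, ξ - η⟫_ℝ

/-- Structure condition (S2b): strong `p`-monotonicity. -/
def CondS2b {n : ℕ} (p ν : ℝ) (U : Set (Rp n)) (A : Rp n → Rn n → Rn n) : Prop :=
  ∀ᵐ z ∂(volume.restrict U), ∀ ξ η : Rn n,
    ν * ‖ξ - η‖ ^ p ≤ ⟪A z ξ - A z η, ξ - η⟫_ℝ

/-- The oscillation `osc_Q v = sup_Q v − inf_Q v`. -/
def oscOn {n : ℕ} (v : Rp n → ℝ) (Q : Set (Rp n)) : ℝ := sSup (v '' Q) - sInf (v '' Q)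

/-- `(κ, C̃)` is an intrinsic Hölder-decay pair for `𝒜`. -/
def HolderDecayPair {n : ℕ} (p : ℝ) (A : Rp n → Rn n → Rn n) (κ Ct : ℝ) : Prop :=
  0 < κ ∧ κ ≤ 1 ∧ 0 < Ct ∧
  ∀ z₀ : Rp n, ∀ R ω lam : ℝ, 0 < R → 0 < ω → 0 < lam →
    ∀ (v : Rp n → ℝ) (dv : Rp n → Rn n),
      IsWeakSolOn p A v dv (cylQ p z₀ R (lam * R ^ κ)) →
      Ct * ω / R ^ κ ≤ lam →
      oscOn v (cylQ p z₀ R (lam * R ^ κ)) ≤ ω →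
      ∀ r, 0 < r → r < R → oscOn v (cylQ p z₀ r (lam * r ^ κ)) ≤ lam * r ^ κ

/-- The parabolic boundary `∂_par (U' × (t₁,t₂)) = (∂U' × [t₁,t₂)) ∪ (closure U' × {t₁})`. -/
def parabBdryOf {n : ℕ} (U' : Set (Rn n)) (t₁ t₂ : ℝ) : Set (Rp n) :=
  (frontier U' ×ˢ Set.Ico t₁ t₂) ∪ (closure U' ×ˢ ({t₁} : Set ℝ))

/-- `u` is `𝒜`-superparabolic in `ΩT`: lower semicontinuous and satisfying the comparison
principle against continuous weak solutions on subcylinders compactly contained in `ΩT`. -/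
def IsSuperparabolicOn {n : ℕ} (p : ℝ) (A : Rp n → Rn n → Rn n)
    (u : Rp n → ℝ) (ΩT : Set (Rp n)) : Prop :=
  LowerSemicontinuousOn u ΩT ∧
  ∀ (U' : Set (Rn n)) (t₁ t₂ : ℝ), IsOpen U' → t₁ < t₂ →
    IsCompact (closure (U' ×ˢ Set.Ioo t₁ t₂)) →
    closure (U' ×ˢ Set.Ioo t₁ t₂) ⊆ ΩT →
    ∀ (h : Rp n → ℝ) (dh : Rp n → Rn n),
      IsWeakSolOn p A h dh (U' ×ˢ Set.Ioo t₁ t₂) →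
      ContinuousOn h (closure (U' ×ˢ Set.Ioo t₁ t₂)) →
      (∀ z ∈ parabBdryOf U' t₁ t₂, h z ≤ u z) →
      ∀ z ∈ U' ×ˢ Set.Ioo t₁ t₂, h z ≤ u z

/-- `v` (with weak gradient `dv`) solves the obstacle problem in `Q` with obstacle `ψ` and
parabolic boundary `bdry`: it is continuous on `closure Q`, lies above the obstacle, agrees
with the obstacle on the parabolic boundary, is a weak supersolution in `Q`, a weak solution
in `Q ∩ {v > ψ}`, and is the smallest weak supersolution above `ψ`. -/
def IsObstacleSol {n : ℕ} (p : ℝ) (A : Rp n → Rn n → Rn n)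
    (ψ v : Rp n → ℝ) (dv : Rp n → Rn n) (Q bdry : Set (Rp n)) : Prop :=
  ContinuousOn v (closure Q) ∧
  (∀ z ∈ Q, ψ z ≤ v z) ∧ (∀ z ∈ bdry, v z = ψ z) ∧
  IsWeakSuperOn p A v dv Q ∧
  IsWeakSolOn p A v dv {z ∈ Q | ψ z < v z} ∧
  ∀ (w : Rp n → ℝ) (dw : Rp n → Rn n), IsWeakSuperOn p A w dw Q →
    (∀ z ∈ Q, ψ z ≤ w z) → ∀ᵐ z ∂(volume.restrict Q), v z ≤ w z

private lemma aux_abs_rpow_inv {p : ℝ} (hp : 0 < p) (x : ℝ) : (|x| ^ p) ^ (1 / p) = |x| := by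
  rw [← Real.rpow_mul (abs_nonneg x), mul_one_div_cancel hp.ne', Real.rpow_one]

private lemma aux_min_max_abs (a k : ℝ) (hk : 0 ≤ k) :
    min (max a 0) k = |min a k| - |min a 0| := by
  rcases le_total a 0 with h | h
  · rw [max_eq_right h, min_eq_left hk, min_eq_left (h.trans hk), min_eq_left h,
      abs_of_nonpos h]
    ring
  · rw [max_eq_left h, min_eq_right h, abs_of_nonneg (le_min h hk), abs_zero]
    ring

private lemma aux_abs_min_le (a k : ℝ) (hk : 0 ≤ k) : |min a k| ≤ |a| := by
  rcases le_total a k with h | h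
  · rw [min_eq_left h]
  · rw [min_eq_right h, abs_of_nonneg hk, abs_of_nonneg (hk.trans h)]
    exact h

private lemma aux_le_one_add_rpow {q : ℝ} (hq : 1 ≤ q) {x : ℝ} (hx : 0 ≤ x) :
    x ≤ 1 + x ^ q := by
  rcases le_total x 1 with h | h
  · nlinarith [Real.rpow_nonneg hx q]
  · calc x = x ^ (1 : ℝ) := (Real.rpow_one x).symm
    _ ≤ x ^ q := Real.rpow_le_rpow_of_exponent_le h hq
    _ ≤ 1 + x ^ q := by linarith

/-- equation (2.2): the Riesz measures `μ_k` of the truncations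
`min(u,k)` of a solution of the measure-data problem converge weakly to `μ`:
`∫ φ dμ_k → ∫ φ dμ` for every test function `φ`. -/
theorem truncation_riesz_measures_converge_weakly
    (n : ℕ) (hn : 1 ≤ n) (Ω : Set (Rn n)) (hΩ : IsOpen Ω) (T : ℝ) (hT : 0 < T)
    (p ν L : ℝ) (hp : 2 ≤ p) (hν : 0 < ν) (hνL : ν ≤ L)
    (A : Rp n → Rn n → Rn n)
    (hA : Caratheodory (Ω ×ˢ Set.Ioo 0 T) A)
    (hS1 : CondS1 p ν L (Ω ×ˢ Set.Ioo 0 T) A)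
    (μ : Measure (Rp n))
    (hμloc : ∀ K : Set (Rp n), K ⊆ Ω ×ˢ Set.Ioo 0 T → IsCompact K → μ K < ⊤)
    (u : Rp n → ℝ) (du : Rp n → Rn n)
    (hsol : IsWeakSolMeasureOn p A u du (Ω ×ˢ Set.Ioo 0 T) μ)
    (duk : ℕ → Rp n → Rn n) (μk : ℕ → Measure (Rp n))
    (hgrad : ∀ k : ℕ, ∀ᵐ z ∂(volume.restrict (Ω ×ˢ Set.Ioo 0 T)),
      duk k z = if u z < (k : ℝ) then du z else 0)
    (hLp : ∀ k : ℕ, LqLocOn p (fun z => min (u z) (k : ℝ)) (Ω ×ˢ Set.Ioo 0 T) ∧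
      LqLocOnVec p (duk k) (Ω ×ˢ Set.Ioo 0 T))
    (hsuper : ∀ k : ℕ,
      IsWeakSuperOn p A (fun z => min (u z) (k : ℝ)) (duk k) (Ω ×ˢ Set.Ioo 0 T))
    (hriesz : ∀ k : ℕ,
      IsRieszMeasureOn A (fun z => min (u z) (k : ℝ)) (duk k) (Ω ×ˢ Set.Ioo 0 T) (μk k)) :
    ∀ φ : Rp n → ℝ, IsTestOn φ (Ω ×ˢ Set.Ioo 0 T) →
      Filter.Tendsto (fun k : ℕ => ∫ z, φ z ∂(μk k)) Filter.atTop
        (𝓝 (∫ z, φ z ∂μ)) := by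
  intro φ hφ
  classical
  obtain ⟨hφc, hφs, hφU⟩ := hφ
  set U : Set (Rp n) := Ω ×ˢ Set.Ioo 0 T with hUdef
  have hK : IsCompact (tsupport φ) := hφs
  set K : Set (Rp n) := tsupport φ with hKdef
  have hKU : K ⊆ U := hφU
  have hKm : MeasurableSet K := hK.isClosed.measurableSet
  have hp1 : (1:ℝ) ≤ p - 1 := by linarith
  have hp0 : (0:ℝ) < p := by linarith
  have hL0 : (0:ℝ) < L := lt_of_lt_of_le hν hνL
  -- continuity of the derivatives of the test function
  have hfd : Continuous (fderiv ℝ φ) := hφc.continuous_fderiv (by simp)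
  have htd : Continuous (tDeriv φ) := hfd.clm_apply continuous_const
  have hsg : Continuous (sGrad φ) :=
    ((EuclideanSpace.equiv (Fin n) ℝ).symm.continuous).comp
      (continuous_pi fun i => hfd.clm_apply continuous_const)
  -- vanishing of derivatives outside K
  have hvan : ∀ z, z ∉ K → fderiv ℝ φ z = 0 := by
    intro z hz
    have h0 : φ =ᶠ[𝓝 z] fun _ => 0 := by
      filter_upwards [hK.isClosed.isOpen_compl.mem_nhds hz] with w hw
      exact image_eq_zero_of_notMem_tsupport hw
    rw [h0.fderiv_eq]
    exact fderiv_const_apply 0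
  have htd0 : ∀ z, z ∉ K → tDeriv φ z = 0 := by
    intro z hz
    simp [tDeriv, hvan z hz]
  have hsg0 : ∀ z, z ∉ K → sGrad φ z = 0 := by
    intro z hz
    unfold sGrad
    rw [hvan z hz]
    ext i
    simp
  -- the reduced integrands
  set g : Rp n → ℝ := fun z => ⟪A z (du z), sGrad φ z⟫_ℝ with hgdef
  set Fi : Rp n → ℝ := fun z => -(u z) * tDeriv φ z + g z with hFdef
  set G : ℕ → Rp n → ℝ :=
    fun k z => -(min (u z) (k:ℝ)) * tDeriv φ z + (if u z < (k:ℝ) then g z else 0) with hGdef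
  -- localization of the weak form integral to K
  have hloc : ∀ (v : Rp n → ℝ) (w : Rp n → Rn n),
      (∫ z in U, (-(v z) * tDeriv φ z + ⟪A z (w z), sGrad φ z⟫_ℝ) ∂volume)
        = ∫ z in K, (-(v z) * tDeriv φ z + ⟪A z (w z), sGrad φ z⟫_ℝ) ∂volume := by
    intro v w
    have hind : K.indicator (fun z => -(v z) * tDeriv φ z + ⟪A z (w z), sGrad φ z⟫_ℝ) =
        fun z => -(v z) * tDeriv φ z + ⟪A z (w z), sGrad φ z⟫_ℝ := by
      apply Set.indicator_eq_self.2
      intro z hz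
      by_contra hzK
      exact hz (by simp [htd0 z hzK, hsg0 z hzK])
    calc (∫ z in U, (-(v z) * tDeriv φ z + ⟪A z (w z), sGrad φ z⟫_ℝ) ∂volume)
        = ∫ z in U, K.indicator (fun z => -(v z) * tDeriv φ z + ⟪A z (w z), sGrad φ z⟫_ℝ) z ∂volume := by
          rw [hind]
      _ = ∫ z in U ∩ K, (-(v z) * tDeriv φ z + ⟪A z (w z), sGrad φ z⟫_ℝ) ∂volume :=
          setIntegral_indicator hKm
      _ = ∫ z in K, (-(v z) * tDeriv φ z + ⟪A z (w z), sGrad φ z⟫_ℝ) ∂volume := by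
          rw [Set.inter_eq_self_of_subset_right hKU]
  -- structure condition on K
  have hS1' : ∀ᵐ z ∂(volume.restrict U), ∀ ξ : Rn n,
      ν * ‖ξ‖ ^ p ≤ ⟪A z ξ, ξ⟫_ℝ ∧ ‖A z ξ‖ ≤ L * ‖ξ‖ ^ (p - 1) := hS1
  have hS1K : ∀ᵐ z ∂(volume.restrict K),
      A z 0 = 0 ∧ ‖A z (du z)‖ ≤ L * ‖du z‖ ^ (p - 1) := by
    filter_upwards [ae_restrict_of_ae_restrict_of_subset hKU hS1'] with z hz
    constructor
    · have h0 := (hz 0).2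
      rw [norm_zero, Real.zero_rpow (by linarith : p - 1 ≠ 0), mul_zero] at h0
      exact norm_le_zero_iff.1 h0
    · exact (hz (du z)).2
  -- the integral identities
  have hμeq : ∫ z, φ z ∂μ = ∫ z in K, Fi z ∂volume := by
    rw [← hsol.2.2.2 φ ⟨hφc, hφs, hφU⟩]
    show (∫ z in U, (-(u z) * tDeriv φ z + ⟪A z (du z), sGrad φ z⟫_ℝ) ∂volume) = _
    rw [hloc u du]
  have hμkeq : ∀ k : ℕ, ∫ z, φ z ∂(μk k) = ∫ z in K, G k z ∂volume := by
    intro k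
    rw [← (hriesz k).2.2 φ ⟨hφc, hφs, hφU⟩]
    show (∫ z in U, (-(min (u z) (k:ℝ)) * tDeriv φ z + ⟪A z (duk k z), sGrad φ z⟫_ℝ) ∂volume) = _
    rw [hloc (fun z => min (u z) (k:ℝ)) (duk k)]
    apply integral_congr_ae
    have h1 : ∀ᵐ z ∂(volume.restrict K), duk k z = if u z < (k:ℝ) then du z else 0 :=
      ae_restrict_of_ae_restrict_of_subset hKU (hgrad k)
    filter_upwards [h1, hS1K] with z hz1 hz2
    simp only [hGdef, hgdef]
    rw [hz1]
    by_cases hcase : u z < (k:ℝ)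
    · rw [if_pos hcase, if_pos hcase]
    · rw [if_neg hcase, if_neg hcase, hz2.1, inner_zero_left]
  -- a.e.-measurability of u on K
  have habs : ∀ k : ℕ, AEMeasurable (fun z => |min (u z) (k:ℝ)|) (volume.restrict K) := by
    intro k
    have h1 : IntegrableOn (fun z => |min (u z) (k:ℝ)| ^ p) K volume := (hLp k).1 K hKU hK
    have h2 : AEMeasurable (fun z => |min (u z) (k:ℝ)| ^ p) (volume.restrict K) :=
      h1.aestronglyMeasurable.aemeasurable
    have h3 : AEMeasurable (fun z => (|min (u z) (k:ℝ)| ^ p) ^ (1/p)) (volume.restrict K) :=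
      ((Real.continuous_rpow_const (by positivity : (0:ℝ) ≤ 1/p)).measurable).comp_aemeasurable h2
    simpa only [aux_abs_rpow_inv hp0] using h3
  have hneg : AEMeasurable (fun z => min (u z) 0) (volume.restrict K) := by
    have h := (habs 0).neg
    have heq : (fun z => min (u z) 0) = fun z => -|min (u z) ((0:ℕ):ℝ)| := by
      funext z
      rw [Nat.cast_zero, abs_of_nonpos (min_le_right _ _), neg_neg]
    rw [heq]
    exact h
  have hposk : ∀ k : ℕ, AEMeasurable (fun z => min (max (u z) 0) (k:ℝ)) (volume.restrict K) := by
    intro k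
    have h := (habs k).sub (habs 0)
    have heq : (fun z => min (max (u z) 0) (k:ℝ))
        = fun z => |min (u z) (k:ℝ)| - |min (u z) ((0:ℕ):ℝ)| := by
      funext z
      rw [Nat.cast_zero]
      exact aux_min_max_abs (u z) k (Nat.cast_nonneg k)
    rw [heq]
    exact h
  have hmax : AEMeasurable (fun z => max (u z) 0) (volume.restrict K) := by
    apply aemeasurable_of_tendsto_metrizable_ae atTop hposk
    refine ae_of_all _ fun z => ?_
    obtain ⟨N, hN⟩ := exists_nat_gt (max (u z) 0)
    refine Tendsto.congr' ?_ tendsto_const_nhds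
    filter_upwards [eventually_ge_atTop N] with k hk
    exact (min_eq_left (le_of_lt (lt_of_lt_of_le hN (Nat.cast_le.2 hk)))).symm
  have hu : AEMeasurable u (volume.restrict K) := by
    have heq : u = fun z => max (u z) 0 + min (u z) 0 := by
      funext z
      rcases le_total (u z) 0 with h | h
      · rw [max_eq_right h, min_eq_left h, zero_add]
      · rw [max_eq_left h, min_eq_right h, add_zero]
    rw [heq]
    exact hmax.add hneg
  -- bounds on the derivatives of φ on K
  obtain ⟨C1, hC1⟩ := hK.exists_bound_of_continuousOn htd.continuousOn
  obtain ⟨C2, hC2⟩ := hK.exists_bound_of_continuousOn hsg.continuousOn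
  set C1' : ℝ := max C1 0 with hC1'def
  set C2' : ℝ := max C2 0 with hC2'def
  have hC1'0 : 0 ≤ C1' := le_max_right _ _
  have hC2'0 : 0 ≤ C2' := le_max_right _ _
  -- the dominating function
  set B : Rp n → ℝ :=
    fun z => C1' * (1 + |u z| ^ (p-1)) + (L * C2') * ‖du z‖ ^ (p-1) with hBdef
  have hBint : Integrable B (volume.restrict K) := by
    apply Integrable.add
    · apply Integrable.const_mul
      exact ((integrableOn_const hK.measure_lt_top.ne : IntegrableOn (fun _ => (1:ℝ)) K volume)).add (hsol.1 K hKU hK)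
    · exact (hsol.2.1 K hKU hK).const_mul _
  have h_bound : ∀ k : ℕ, ∀ᵐ z ∂(volume.restrict K), ‖G k z‖ ≤ B z := by
    intro k
    filter_upwards [hS1K, ae_restrict_mem hKm] with z hz hzK
    have hrnn : (0:ℝ) ≤ ‖du z‖ ^ (p-1) := Real.rpow_nonneg (norm_nonneg _) _
    have hg1 : |g z| ≤ (L * C2') * ‖du z‖ ^ (p-1) := by
      calc |g z| ≤ ‖A z (du z)‖ * ‖sGrad φ z‖ := abs_real_inner_le_norm _ _
      _ ≤ (L * ‖du z‖ ^ (p-1)) * C2' := by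
          apply mul_le_mul hz.2 ((hC2 z hzK).trans (le_max_left _ _)) (norm_nonneg _)
          positivity
      _ = (L * C2') * ‖du z‖ ^ (p-1) := by ring
    have htb : |tDeriv φ z| ≤ C1' := (hC1 z hzK).trans (le_max_left _ _)
    have hminb : |min (u z) (k:ℝ)| ≤ |u z| := aux_abs_min_le _ _ (Nat.cast_nonneg k)
    have hite : |(if u z < (k:ℝ) then g z else 0)| ≤ (L * C2') * ‖du z‖ ^ (p-1) := by
      split
      · exact hg1
      · rw [abs_zero]
        exact (abs_nonneg (g z)).trans hg1
    have h1 : ‖G k z‖ ≤ |(-(min (u z) (k:ℝ))) * tDeriv φ z|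
        + |(if u z < (k:ℝ) then g z else 0)| := by
      simp only [hGdef, Real.norm_eq_abs]
      exact abs_add_le _ _
    have h2 : |(-(min (u z) (k:ℝ))) * tDeriv φ z| ≤ |u z| * C1' := by
      rw [abs_mul, abs_neg]
      exact mul_le_mul hminb htb (abs_nonneg _) (abs_nonneg _)
    have h3 : |u z| * C1' ≤ C1' * (1 + |u z| ^ (p-1)) := by
      have h4 := aux_le_one_add_rpow hp1 (abs_nonneg (u z))
      nlinarith [abs_nonneg (u z)]
    calc ‖G k z‖ ≤ |u z| * C1' + (L * C2') * ‖du z‖ ^ (p-1) := by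
          refine h1.trans (add_le_add h2 hite)
    _ ≤ B z := by
          rw [hBdef]
          exact add_le_add_left h3 _
  have h_lim : ∀ᵐ z ∂(volume.restrict K), Tendsto (fun k : ℕ => G k z) atTop (𝓝 (Fi z)) := by
    refine ae_of_all _ fun z => ?_
    obtain ⟨N, hN⟩ := exists_nat_gt (u z)
    refine Tendsto.congr' ?_ tendsto_const_nhds
    filter_upwards [eventually_ge_atTop N] with k hk
    have hlt : u z < (k:ℝ) := lt_of_lt_of_le hN (Nat.cast_le.2 hk)
    simp only [hGdef, hFdef, min_eq_left hlt.le, if_pos hlt]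
  -- assemble
  have hrw : (fun k : ℕ => ∫ z, φ z ∂(μk k)) = fun k => ∫ z in K, G k z ∂volume :=
    funext hμkeq
  rw [hrw, hμeq]
  by_cases hg : AEStronglyMeasurable g (volume.restrict K)
  · -- measurable case: dominated convergence
    obtain ⟨u', hu'm, hu'e⟩ := hu
    have hmeasG : ∀ k : ℕ, AEStronglyMeasurable (G k) (volume.restrict K) := by
      intro k
      have hpart1 : AEStronglyMeasurable (fun z => -(min (u' z) (k:ℝ)) * tDeriv φ z)
          (volume.restrict K) :=
        (((hu'm.min measurable_const).neg).mul htd.measurable).aestronglyMeasurable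
      have hpart2 : AEStronglyMeasurable ({z | u' z < (k:ℝ)}.indicator g)
          (volume.restrict K) :=
        hg.indicator (measurableSet_lt hu'm measurable_const)
      apply (hpart1.add hpart2).congr
      filter_upwards [hu'e] with z hz
      by_cases hcase : u z < (k:ℝ)
      · simp [hGdef, Set.indicator_apply, Set.mem_setOf_eq, ← hz, hcase]
      · simp [hGdef, Set.indicator_apply, Set.mem_setOf_eq, ← hz, hcase]
    exact tendsto_integral_of_dominated_convergence B hmeasG hBint h_bound h_lim
  · -- non-measurable case: all integrals vanish eventually
    have hFi : ¬ Integrable Fi (volume.restrict K) := by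
      intro hint
      apply hg
      have h2 : AEStronglyMeasurable (fun z => Fi z + u z * tDeriv φ z) (volume.restrict K) :=
        hint.aestronglyMeasurable.add ((hu.mul htd.measurable.aemeasurable).aestronglyMeasurable)
      apply h2.congr
      refine ae_of_all _ fun z => ?_
      simp only [hFdef]
      ring
    rw [integral_undef hFi]
    have hev : ∀ᶠ k in atTop, ¬ AEStronglyMeasurable (G k) (volume.restrict K) := by
      by_contra hcon
      rw [Filter.not_eventually] at hcon
      have hcon2 : ∃ᶠ k in atTop, AEStronglyMeasurable (G k) (volume.restrict K) := by
        simpa [not_not] using hcon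
      obtain ⟨ks, hksm, hksP⟩ := Filter.extraction_of_frequently_atTop hcon2
      apply hg
      have hj : ∀ j : ℕ, AEStronglyMeasurable
          (fun z => if u z < ((ks j : ℕ):ℝ) then g z else 0) (volume.restrict K) := by
        intro j
        have h1 : AEStronglyMeasurable (fun z => min (u z) ((ks j : ℕ):ℝ) * tDeriv φ z)
            (volume.restrict K) :=
          ((hu.min aemeasurable_const).mul htd.measurable.aemeasurable).aestronglyMeasurable
        have h2 := (hksP j).add h1
        apply h2.congr
        refine ae_of_all _ fun z => ?_
        show G (ks j) z + min (u z) ((ks j : ℕ):ℝ) * tDeriv φ z = _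
        simp only [hGdef]
        ring
      apply aestronglyMeasurable_of_tendsto_ae atTop hj
      refine ae_of_all _ fun z => ?_
      obtain ⟨N, hN⟩ := exists_nat_gt (u z)
      refine Tendsto.congr' ?_ tendsto_const_nhds
      filter_upwards [eventually_ge_atTop N] with j hj2
      have h3 : u z < ((ks j : ℕ):ℝ) :=
        lt_of_lt_of_le hN (Nat.cast_le.2 (le_trans hj2 hksm.le_apply))
      rw [if_pos h3]
    refine Tendsto.congr' ?_ tendsto_const_nhds
    filter_upwards [hev] with k hk
    exact (integral_undef fun hint => hk hint.aestronglyMeasurable).symm
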